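/- For all real numbers x, y ≥ 0, one has (e^{xy} - 1 - xy)^2 ≤ (e^{x^2} - 1 - x^2)(e^{y^2} - 1 - y^2). -/

import Mathlib

/-! Both sides are series in `k ≥ 2` with terms `(xy)^k/k!`, `(x²)^k/k!`, `(y²)^k/k!`; the
square of each left term is the product of the right ones, so Cauchy–Schwarz applies termwise. -/

open Filter

theorem HasSum.sq_le_mul_of_sq_le_mul {ι R : Type*} [CommRing R] [LinearOrder R]
    [IsStrictOrderedRing R] [TopologicalSpace R] [OrderTopology R] [ContinuousMul R]
    {r f g : ι → R} {a b c : R} (hr : HasSum r a) (hf : HasSum f b) (hg : HasSum g c)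
    (hf₀ : ∀ i, 0 ≤ f i) (hg₀ : ∀ i, 0 ≤ g i) (hrfg : ∀ i, r i ^ 2 ≤ f i * g i) :
    a ^ 2 ≤ b * c :=
  le_of_tendsto_of_tendsto' (hr.pow 2) (Tendsto.mul hf hg) fun s =>
    Finset.sum_sq_le_sum_mul_sum_of_sq_le_mul s (fun i _ => hf₀ i) (fun i _ => hg₀ i)
      fun i _ => hrfg i

theorem Real.hasSum_exp_sub_one_sub (t : ℝ) :
    HasSum (fun n : ℕ => t ^ (n + 2) / (n + 2).factorial) (Real.exp t - 1 - t) := by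
  have h := (hasSum_nat_add_iff' 2).mpr
    (Real.exp_eq_exp_ℝ ▸ NormedSpace.expSeries_div_hasSum_exp t)
  simpa [Finset.sum_range_succ, sub_sub] using h

theorem stmt_1_general (x y : ℝ) :
    (Real.exp (x * y) - 1 - x * y) ^ 2 ≤
      (Real.exp (x ^ 2) - 1 - x ^ 2) * (Real.exp (y ^ 2) - 1 - y ^ 2) := by
  refine (Real.hasSum_exp_sub_one_sub (x * y)).sq_le_mul_of_sq_le_mul
    (Real.hasSum_exp_sub_one_sub (x ^ 2)) (Real.hasSum_exp_sub_one_sub (y ^ 2))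
    (fun n => by positivity) (fun n => by positivity) fun n => le_of_eq ?_
  ring

theorem stmt_1 (x y : ℝ) (hx : 0 ≤ x) (hy : 0 ≤ y) :
    (Real.exp (x * y) - 1 - x * y) ^ 2 ≤
      (Real.exp (x ^ 2) - 1 - x ^ 2) * (Real.exp (y ^ 2) - 1 - y ^ 2) :=
  stmt_1_general x y
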